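/- arXiv:2506.14325 — 3 statements merged into one kernel-verified Lean document; each statement's English description precedes it below -/
import Mathlib

section
/- The map Φ_r : T*S³_r → T*ℝ³ given by Φ_r(x,y) = (r·x⃗/(r-x₀), ((r-x₀)/r)·y⃗ + (y₀/r)·x⃗) (stereographic projection from the north pole) has two-sided inverse Ψ_r(p,q) = (r(|p|²-r²)/(|p|²+r²), 2r²p/(|p|²+r²); (p·q)/r, ((|p|²+r²)/(2r²))q - ((p·q)/r²)p) on the complement of the north pole fiber. -/
open Real

noncomputable section

/-- Vectors in ℝ³. -/
abbrev V3 := Fin 3 → ℝ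

/-- Dot product on ℝ³. -/
def dot3 (v w : V3) : ℝ := ∑ i, v i * w i

/-- Cross product on ℝ³. -/
def cross3 (v w : V3) : V3 :=
  ![v 1 * w 2 - v 2 * w 1, v 2 * w 0 - v 0 * w 2, v 0 * w 1 - v 1 * w 0]

/-- Euclidean norm on ℝ³. -/
def norm3 (v : V3) : ℝ := Real.sqrt (dot3 v v)

/-- Stereographic projection from the north pole of the sphere of radius r,
as a map on cotangent coordinates (x₀, x⃗; y₀, y⃗) ↦ (p, q). -/
def stereoProj (r : ℝ) (x0 : ℝ) (xv : V3) (y0 : ℝ) (yv : V3) : V3 × V3 :=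
  ((r / (r - x0)) • xv, ((r - x0) / r) • yv + (y0 / r) • xv)

/-- Inverse stereographic projection (p, q) ↦ (x₀, x⃗; y₀, y⃗). -/
def stereoInv (r : ℝ) (p q : V3) : ℝ × V3 × ℝ × V3 :=
  (r * (dot3 p p - r ^ 2) / (dot3 p p + r ^ 2),
   (2 * r ^ 2 / (dot3 p p + r ^ 2)) • p,
   dot3 p q / r,
   ((dot3 p p + r ^ 2) / (2 * r ^ 2)) • q - (dot3 p q / r ^ 2) • p)

/-! The only computation is that of two scalars. On the sphere, the image `p` of a point with
`x₀ ≠ r` satisfies `|p|² + r² = 2r³/(r - x₀)`, and on the tangency locus `p · q = r y₀`;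
conversely `r - x₀ = 2r³/(|p|² + r²)` for `(x₀, x⃗) = Ψ_r(p, q)`. Substituting these, each
component of either composite becomes an identity of rational functions. -/

open Matrix

lemma dot3_eq_dotProduct (v w : V3) : dot3 v w = v ⬝ᵥ w := rfl

lemma dot3_self_nonneg (v : V3) : 0 ≤ dot3 v v :=
  Finset.sum_nonneg fun i _ => mul_self_nonneg (v i)

section Stereo

variable {r x0 y0 : ℝ} {xv yv : V3}

lemma stereoProj_fst_dot_self (hsphere : x0 ^ 2 + dot3 xv xv = r ^ 2) (hx0 : x0 ≠ r) :
    dot3 (stereoProj r x0 xv y0 yv).1 (stereoProj r x0 xv y0 yv).1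
      = 2 * r ^ 3 / (r - x0) - r ^ 2 := by
  have hrx : r - x0 ≠ 0 := sub_ne_zero.mpr hx0.symm
  simp only [stereoProj, dot3_eq_dotProduct, smul_dotProduct, dotProduct_smul, smul_eq_mul] at *
  rw [show xv ⬝ᵥ xv = r ^ 2 - x0 ^ 2 by linarith]
  field_simp
  ring

lemma stereoProj_fst_dot_snd (hsphere : x0 ^ 2 + dot3 xv xv = r ^ 2)
    (htangent : x0 * y0 + dot3 xv yv = 0) (hx0 : x0 ≠ r) (hr : r ≠ 0) :
    dot3 (stereoProj r x0 xv y0 yv).1 (stereoProj r x0 xv y0 yv).2 = r * y0 := by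
  have hrx : r - x0 ≠ 0 := sub_ne_zero.mpr hx0.symm
  simp only [stereoProj, dot3_eq_dotProduct, smul_dotProduct, dotProduct_smul, dotProduct_add,
    smul_eq_mul] at *
  rw [show xv ⬝ᵥ xv = r ^ 2 - x0 ^ 2 by linarith, show xv ⬝ᵥ yv = -(x0 * y0) by linarith]
  field_simp
  ring

theorem stereoInv_stereoProj (hsphere : x0 ^ 2 + dot3 xv xv = r ^ 2)
    (htangent : x0 * y0 + dot3 xv yv = 0) (hx0 : x0 ≠ r) (hr : r ≠ 0) :
    stereoInv r (stereoProj r x0 xv y0 yv).1 (stereoProj r x0 xv y0 yv).2 = (x0, xv, y0, yv) := by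
  have hrx : r - x0 ≠ 0 := sub_ne_zero.mpr hx0.symm
  simp only [stereoInv, stereoProj_fst_dot_self hsphere hx0,
    stereoProj_fst_dot_snd hsphere htangent hx0 hr]
  simp only [stereoProj]
  refine Prod.ext ?_ (Prod.ext ?_ (Prod.ext ?_ ?_))
  · field_simp
    ring
  · ext i
    simp only [sub_add_cancel, Pi.smul_apply, smul_eq_mul]
    field_simp
  · field_simp
  · ext i
    simp only [Pi.add_apply, Pi.smul_apply, Pi.sub_apply, smul_eq_mul]
    field_simp
    ring

end Stereo

section StereoInv

variable {r : ℝ} (p q : V3)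

lemma dot3_self_add_sq_pos (hr : r ≠ 0) : 0 < dot3 p p + r ^ 2 := by
  have := dot3_self_nonneg p
  positivity

lemma stereoInv_fst_ne (hr : r ≠ 0) : (stereoInv r p q).1 ≠ r := by
  have hD := (dot3_self_add_sq_pos p hr).ne'
  simp only [stereoInv, ne_eq, div_eq_iff hD, mul_right_inj' hr]
  intro h
  exact pow_ne_zero 2 hr (by linarith)

lemma sub_stereoInv_fst (hr : r ≠ 0) :
    r - (stereoInv r p q).1 = 2 * r ^ 3 / (dot3 p p + r ^ 2) := by
  have hD := (dot3_self_add_sq_pos p hr).ne'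
  simp only [stereoInv]
  field_simp
  ring

lemma stereoInv_mem_sphere (hr : r ≠ 0) :
    (stereoInv r p q).1 ^ 2 + dot3 (stereoInv r p q).2.1 (stereoInv r p q).2.1 = r ^ 2 := by
  have hD := (dot3_self_add_sq_pos p hr).ne'
  simp only [stereoInv, dot3_eq_dotProduct, smul_dotProduct, dotProduct_smul, smul_eq_mul] at *
  field_simp
  ring

lemma stereoInv_tangent (hr : r ≠ 0) :
    (stereoInv r p q).1 * (stereoInv r p q).2.2.1
      + dot3 (stereoInv r p q).2.1 (stereoInv r p q).2.2.2 = 0 := by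
  have hD := (dot3_self_add_sq_pos p hr).ne'
  simp only [stereoInv, dot3_eq_dotProduct, smul_dotProduct, dotProduct_smul, dotProduct_sub,
    smul_eq_mul] at *
  field_simp
  ring

theorem stereoProj_stereoInv (hr : r ≠ 0) :
    stereoProj r (stereoInv r p q).1 (stereoInv r p q).2.1
      (stereoInv r p q).2.2.1 (stereoInv r p q).2.2.2 = (p, q) := by
  have hD := (dot3_self_add_sq_pos p hr).ne'
  simp only [stereoProj, sub_stereoInv_fst p q hr]
  simp only [stereoInv]
  refine Prod.ext ?_ ?_
  · ext i
    simp only [Pi.smul_apply, smul_eq_mul]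
    field_simp
  · ext i
    simp only [Pi.add_apply, Pi.smul_apply, Pi.sub_apply, smul_eq_mul]
    field_simp
    ring

end StereoInv

/-- The stereographic projection Φ_r and Ψ_r are two-sided inverses between the
complement of the north pole fiber in T*S³_r and T*ℝ³. -/
theorem stereo_two_sided_inverse (r : ℝ) (hr : 0 < r) :
    (∀ (x0 : ℝ) (xv : V3) (y0 : ℝ) (yv : V3),
      x0 ^ 2 + dot3 xv xv = r ^ 2 → x0 * y0 + dot3 xv yv = 0 → x0 ≠ r →
      stereoInv r (stereoProj r x0 xv y0 yv).1 (stereoProj r x0 xv y0 yv).2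
        = (x0, xv, y0, yv)) ∧
    (∀ p q : V3,
      stereoProj r (stereoInv r p q).1 (stereoInv r p q).2.1
          (stereoInv r p q).2.2.1 (stereoInv r p q).2.2.2 = (p, q) ∧
      (stereoInv r p q).1 ^ 2 + dot3 (stereoInv r p q).2.1 (stereoInv r p q).2.1 = r ^ 2 ∧
      (stereoInv r p q).1 * (stereoInv r p q).2.2.1
          + dot3 (stereoInv r p q).2.1 (stereoInv r p q).2.2.2 = 0 ∧
      (stereoInv r p q).1 ≠ r) :=
  ⟨fun _ _ _ _ hsphere htangent hx0 => stereoInv_stereoProj hsphere htangent hx0 hr.ne',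
    fun p q => ⟨stereoProj_stereoInv p q hr.ne', stereoInv_mem_sphere p q hr.ne',
      stereoInv_tangent p q hr.ne', stereoInv_fst_ne p q hr.ne'⟩⟩
end
end

section
/- Fix E₀ < 0 and set r = √(-2E₀). Pulling back the regularized Kepler Hamiltonian K̃(q,p) = (1/2)((|p|²-2E₀)|q|/2)² via the switch map σ(q,p) = (p,-q) and the inverse stereographic projection Ψ_r yields K_r(x,y) = (r⁴/2)|y|² on T*S³_r; that is, for all (q,p), K̃(q,p) = (r⁴/2)|y|² where (x,y) = Ψ_r(p,-q). -/
open Real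

noncomputable section

/-- Pulling back the regularized Kepler Hamiltonian
K̃(q,p) = (1/2)((|p|²-2E₀)|q|/2)² via the switch map σ(q,p) = (p,-q) and the inverse
stereographic projection with r = √(-2E₀) yields (r⁴/2)|y|². -/
theorem moser_regularization (E0 r : ℝ) (hE0 : E0 < 0) (hr : r = Real.sqrt (-2 * E0))
    (p q : V3) :
    (1 / 2) * (((dot3 p p - 2 * E0) * norm3 q) / 2) ^ 2
      = (r ^ 4 / 2) * ((stereoInv r p (-q)).2.2.1 ^ 2
          + dot3 (stereoInv r p (-q)).2.2.2 (stereoInv r p (-q)).2.2.2) := by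
  have hE : (0:ℝ) < -2 * E0 := by linarith
  have hr2 : r ^ 2 = -2 * E0 := by rw [hr]; exact Real.sq_sqrt hE.le
  have hrne : r ≠ 0 := by
    rw [hr]; exact ne_of_gt (Real.sqrt_pos.mpr hE)
  have hE0' : E0 = -(r ^ 2) / 2 := by linarith
  have hq : norm3 q ^ 2 = dot3 q q := by
    unfold norm3
    exact Real.sq_sqrt (Finset.sum_nonneg fun i _ => mul_self_nonneg _)
  have hL : ((dot3 p p - 2 * E0) * norm3 q / 2) ^ 2
      = (dot3 p p - 2 * E0) ^ 2 * dot3 q q / 4 := by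
    rw [← hq]; ring
  rw [hL, hE0']
  simp only [stereoInv, dot3, Fin.sum_univ_three, Pi.sub_apply, Pi.smul_apply,
    Pi.neg_apply, smul_eq_mul]
  field_simp
  ring
end
end

section
/- Let Ψ(t) = exp(tL) be the linearized flow of the planar circular orbit as above, and Ω = diag([[0,1],[-1,0]], [[0,1],[-1,0]]). Then Ω·L = diag(1/ω₀², 1/ω₀⁴, 1, 1/ω₀⁶) is positive definite; hence at every crossing t ∈ 2πω₀³ℤ (where Ψ(t) = Id) the crossing form has signature 4. -/
open Real Matrix

noncomputable section

/-- The linearization matrix of the planar circular orbit. -/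
def linMat (ω₀ : ℝ) : Matrix (Fin 4) (Fin 4) ℝ :=
  !![0, -1 / ω₀ ^ 4, 0, 0;
     1 / ω₀ ^ 2, 0, 0, 0;
     0, 0, 0, -1 / ω₀ ^ 6;
     0, 0, 1, 0]

/-- The standard symplectic matrix Ω = diag([[0,1],[-1,0]], [[0,1],[-1,0]]). -/
def Omega4 : Matrix (Fin 4) (Fin 4) ℝ :=
  !![0, 1, 0, 0;
     -1, 0, 0, 0;
     0, 0, 0, 1;
     0, 0, -1, 0]

/-!
`Ω L` is diagonal with positive entries. The matrix `J = ω₀³ L` squares to `-1`, so the algebra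
map `ℂ → M₄(ℝ)` with `I ↦ J` is continuous and carries `exp (2πm I) = 1` to
`exp (2πmω₀³ L) = 1`.
-/

theorem NormedSpace.exp_two_pi_int_smul_eq_one {A : Type*} [NormedRing A] [NormedAlgebra ℝ A]
    [Algebra ℚ A] {J : A} (hJ : J * J = -1) (m : ℤ) :
    NormedSpace.exp ((2 * π * m) • J) = 1 := by
  let f : ℂ →ₐ[ℝ] A := Complex.liftAux J hJ
  have hf : Continuous f := f.toLinearMap.continuous_of_finiteDimensional
  have hexp : NormedSpace.exp ((2 * π * m : ℝ) • Complex.I) = 1 := by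
    rw [← Complex.exp_eq_exp_ℂ, Complex.exp_eq_one_iff]
    exact ⟨m, by rw [Complex.real_smul]; push_cast; ring⟩
  rw [← Complex.liftAux_apply_I J hJ, ← map_smul, ← NormedSpace.map_exp f hf, hexp, map_one]

theorem Matrix.exp_two_pi_int_smul_eq_one {n : Type*} [Fintype n] [DecidableEq n]
    {J : Matrix n n ℝ} (hJ : J * J = -1) (m : ℤ) :
    NormedSpace.exp ((2 * π * m) • J) = 1 := by
  -- `exp` only sees the topology, which every norm on a finite-dimensional space induces.
  let _ : SeminormedRing (Matrix n n ℝ) := Matrix.linftyOpSemiNormedRing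
  let _ : NormedRing (Matrix n n ℝ) := Matrix.linftyOpNormedRing
  let _ : NormedAlgebra ℝ (Matrix n n ℝ) := Matrix.linftyOpNormedAlgebra
  exact NormedSpace.exp_two_pi_int_smul_eq_one hJ m

theorem Omega4_mul_linMat (ω₀ : ℝ) :
    Omega4 * linMat ω₀ = Matrix.diagonal ![1 / ω₀ ^ 2, 1 / ω₀ ^ 4, 1, 1 / ω₀ ^ 6] := by
  ext i j
  fin_cases i <;> fin_cases j <;>
    simp [Omega4, linMat, Matrix.mul_apply, Fin.sum_univ_four, neg_div]

theorem posDef_Omega4_mul_linMat {ω₀ : ℝ} (hω : ω₀ ≠ 0) : (Omega4 * linMat ω₀).PosDef := by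
  rw [Omega4_mul_linMat, Matrix.posDef_diagonal_iff]
  intro i
  fin_cases i <;> simp <;> positivity

theorem smul_linMat_mul_self {ω₀ : ℝ} (hω : ω₀ ≠ 0) :
    (ω₀ ^ 3 • linMat ω₀) * (ω₀ ^ 3 • linMat ω₀) = -1 := by
  ext i j
  fin_cases i <;> fin_cases j <;>
    simp [linMat, Matrix.mul_apply, Fin.sum_univ_four] <;>
    field_simp

theorem exp_smul_linMat_eq_one {ω₀ : ℝ} (hω : ω₀ ≠ 0) (m : ℤ) :
    NormedSpace.exp ((2 * π * ω₀ ^ 3 * m) • linMat ω₀) = 1 := by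
  rw [show 2 * π * ω₀ ^ 3 * m = 2 * π * m * ω₀ ^ 3 by ring, ← smul_smul]
  exact Matrix.exp_two_pi_int_smul_eq_one (smul_linMat_mul_self hω) m

/-- Ω·L = diag(1/ω₀², 1/ω₀⁴, 1, 1/ω₀⁶) is positive definite, so at every crossing
t ∈ 2πω₀³ℤ (where exp(tL) = Id) the crossing form has signature 4. -/
theorem crossing_form_signature_four (ω₀ : ℝ) (hω : ω₀ ≠ 0) :
    Omega4 * linMat ω₀
      = Matrix.diagonal ![1 / ω₀ ^ 2, 1 / ω₀ ^ 4, 1, 1 / ω₀ ^ 6] ∧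
    (Omega4 * linMat ω₀).PosDef ∧
    (∀ m : ℤ, NormedSpace.exp (((2 * Real.pi * ω₀ ^ 3 * (m : ℝ)) • linMat ω₀)) = 1) ∧
    (∀ v : Fin 4 → ℝ, v ≠ 0 → 0 < v ⬝ᵥ (Omega4 * linMat ω₀).mulVec v) := by
  have hpos := posDef_Omega4_mul_linMat hω
  refine ⟨Omega4_mul_linMat ω₀, hpos, exp_smul_linMat_eq_one hω, fun v hv => ?_⟩
  simpa using hpos.dotProduct_mulVec_pos hv
end
end
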